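/- The uniform ℓ1-contextuality distance is subadditive under independent juxtapositions: for behaviors B1 in a scenario S1 and B2 in a scenario S2, with NC(S1), NC(S2) and NC(S1 ⊗ S2) nonempty, one has D_u(B1 ⊗ B2) ≤ D_u(B1) + D_u(B2), where D_u(B1 ⊗ B2) is computed in the juxtaposed scenario S1 ⊗ S2. -/

import Mathlib

open scoped BigOperators

/-- A probability distribution on a finite type. -/
def IsDist {X : Type} [Fintype X] (f : X → ℝ) : Prop :=
  (∀ x, 0 ≤ f x) ∧ ∑ x, f x = 1

lemma isDist_prodFun {A B : Type} [Fintype A] [Fintype B] {f : A → ℝ} {g : B → ℝ}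
    (hf : IsDist f) (hg : IsDist g) :
    IsDist (fun x : A × B => f x.1 * g x.2) := by
  refine ⟨fun x => mul_nonneg (hf.1 x.1) (hg.1 x.2), ?_⟩
  calc ∑ x : A × B, f x.1 * g x.2 = ∑ a, ∑ b, f a * g b := by
        rw [Fintype.sum_prod_type]
    _ = (∑ a, f a) * (∑ b, g b) := by rw [Finset.sum_mul_sum]
    _ = 1 := by rw [hf.2, hg.2, mul_one]

lemma isDist_prodFun' {K1 J1 K2 J2 : Type} [Fintype K1] [Fintype J1] [Fintype K2] [Fintype J2]
    {f : K1 × J1 → ℝ} {g : K2 × J2 → ℝ} (hf : IsDist f) (hg : IsDist g) :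
    IsDist (fun kj : (K1 × K2) × (J1 × J2) => f (kj.1.1, kj.2.1) * g (kj.1.2, kj.2.2)) := by
  refine ⟨fun kj => mul_nonneg (hf.1 _) (hg.1 _), ?_⟩
  have h := (isDist_prodFun hf hg).2
  rw [← h]
  exact Fintype.sum_equiv (Equiv.prodProdProdComm K1 K2 J1 J2) _ _ (by rintro ⟨⟨a, b⟩, c, d⟩; rfl)

/-- A prepare-and-measure scenario: finite nonempty sets of preparations `I`,
measurements `J` and outcomes `K` (carried as type-class assumptions on the index
types), together with a family of preparation operational equivalences (pairs of
probability distributions on `I`) and a family of measurement operational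
equivalences (pairs of probability distributions on `K × J`). -/
structure Scenario (I J K : Type) [Fintype I] [Fintype J] [Fintype K] where
  PE : Type
  ME : Type
  prepEq : PE → (I → ℝ) × (I → ℝ)
  measEq : ME → (K × J → ℝ) × (K × J → ℝ)
  prep_dist : ∀ s, IsDist (prepEq s).1 ∧ IsDist (prepEq s).2
  meas_dist : ∀ r, IsDist (measEq r).1 ∧ IsDist (measEq r).2

/-- A behavior: a family `p k ∣ j, i` of nonnegative reals, normalized over outcomes. -/
def IsBehavior {I J K : Type} [Fintype I] [Fintype J] [Fintype K]
    (p : I → J → K → ℝ) : Prop :=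
  (∀ i j k, 0 ≤ p i j k) ∧ ∀ i j, ∑ k, p i j k = 1

/-- A behavior is noncontextual in a scenario `S` if it admits a universally
noncontextual ontological model over a finite ontic space. -/
def Noncontextual {I J K : Type} [Fintype I] [Fintype J] [Fintype K]
    (S : Scenario I J K) (p : I → J → K → ℝ) : Prop :=
  ∃ (n : ℕ) (μ : I → Fin n → ℝ) (ξ : Fin n → J → K → ℝ),
    (∀ i, IsDist (μ i)) ∧
    (∀ l j, IsDist (ξ l j)) ∧
    (∀ i j k, p i j k = ∑ l, ξ l j k * μ i l) ∧
    (∀ s l, ∑ i, ((S.prepEq s).1 i - (S.prepEq s).2 i) * μ i l = 0) ∧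
    (∀ r l, ∑ kj : K × J, ((S.measEq r).1 kj - (S.measEq r).2 kj) * ξ l kj.2 kj.1 = 0)

/-- The juxtaposition of two behaviors. -/
def prodBehavior {I1 J1 K1 I2 J2 K2 : Type}
    [Fintype I1] [Fintype J1] [Fintype K1] [Fintype I2] [Fintype J2] [Fintype K2]
    (p1 : I1 → J1 → K1 → ℝ) (p2 : I2 → J2 → K2 → ℝ) :
    I1 × I2 → J1 × J2 → K1 × K2 → ℝ :=
  fun i j k => p1 i.1 j.1 k.1 * p2 i.2 j.2 k.2

/-- The juxtaposition `S1 ⊗ S2` of two scenarios: preparation (resp. measurement)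
equivalences are all pairs `(α ⊗ γ, β ⊗ γ)` with `(α, β)` an equivalence of `S1` and
`γ` an arbitrary distribution on the preparations (resp. measurement events) of `S2`,
together with the symmetric ones coming from `S2`. -/
def Scenario.prod {I1 J1 K1 I2 J2 K2 : Type}
    [Fintype I1] [Fintype J1] [Fintype K1] [Fintype I2] [Fintype J2] [Fintype K2]
    (S1 : Scenario I1 J1 K1) (S2 : Scenario I2 J2 K2) :
    Scenario (I1 × I2) (J1 × J2) (K1 × K2) where
  PE := (S1.PE × {γ : I2 → ℝ // IsDist γ}) ⊕ (S2.PE × {γ : I1 → ℝ // IsDist γ})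
  ME := (S1.ME × {γ : K2 × J2 → ℝ // IsDist γ}) ⊕ (S2.ME × {γ : K1 × J1 → ℝ // IsDist γ})
  prepEq := fun e =>
    match e with
    | Sum.inl (s, γ) =>
        (fun i => (S1.prepEq s).1 i.1 * γ.1 i.2, fun i => (S1.prepEq s).2 i.1 * γ.1 i.2)
    | Sum.inr (s, γ) =>
        (fun i => γ.1 i.1 * (S2.prepEq s).1 i.2, fun i => γ.1 i.1 * (S2.prepEq s).2 i.2)
  measEq := fun e =>
    match e with
    | Sum.inl (r, γ) =>
        (fun kj => (S1.measEq r).1 (kj.1.1, kj.2.1) * γ.1 (kj.1.2, kj.2.2),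
         fun kj => (S1.measEq r).2 (kj.1.1, kj.2.1) * γ.1 (kj.1.2, kj.2.2))
    | Sum.inr (r, γ) =>
        (fun kj => γ.1 (kj.1.1, kj.2.1) * (S2.measEq r).1 (kj.1.2, kj.2.2),
         fun kj => γ.1 (kj.1.1, kj.2.1) * (S2.measEq r).2 (kj.1.2, kj.2.2))
  prep_dist := by
    rintro (⟨s, γ⟩ | ⟨s, γ⟩)
    · exact ⟨isDist_prodFun (S1.prep_dist s).1 γ.2, isDist_prodFun (S1.prep_dist s).2 γ.2⟩
    · exact ⟨isDist_prodFun γ.2 (S2.prep_dist s).1, isDist_prodFun γ.2 (S2.prep_dist s).2⟩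
  meas_dist := by
    rintro (⟨r, γ⟩ | ⟨r, γ⟩)
    · exact ⟨isDist_prodFun' (S1.meas_dist r).1 γ.2, isDist_prodFun' (S1.meas_dist r).2 γ.2⟩
    · exact ⟨isDist_prodFun' γ.2 (S2.meas_dist r).1, isDist_prodFun' γ.2 (S2.meas_dist r).2⟩

/-- A free operation: a pre-processing of preparations, a pre-processing of
measurement choices and, for each simulated measurement, a post-processing of the
outcomes, all given by stochastic maps. -/
structure FreeOp (I J K I' J' K' : Type)
    [Fintype I] [Fintype J] [Fintype K] [Fintype I'] [Fintype J'] [Fintype K'] where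
  qP : I' → I → ℝ
  qM : J' → J → ℝ
  qO : J' → K → K' → ℝ
  qP_dist : ∀ i', IsDist (qP i')
  qM_dist : ∀ j', IsDist (qM j')
  qO_dist : ∀ j' k, IsDist (qO j' k)

/-- Action of a free operation on a behavior. -/
def FreeOp.apply {I J K I' J' K' : Type}
    [Fintype I] [Fintype J] [Fintype K] [Fintype I'] [Fintype J'] [Fintype K']
    (T : FreeOp I J K I' J' K') (p : I → J → K → ℝ) : I' → J' → K' → ℝ :=
  fun i' j' k' => ∑ i, ∑ j, ∑ k, T.qO j' k k' * p i j k * T.qM j' j * T.qP i' i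

/-- `T` lifts the operational equivalences of `S'` to those of `S`. -/
def LiftsEquivalences {I J K I' J' K' : Type}
    [Fintype I] [Fintype J] [Fintype K] [Fintype I'] [Fintype J'] [Fintype K']
    (S : Scenario I J K) (S' : Scenario I' J' K') (T : FreeOp I J K I' J' K') : Prop :=
  (∀ s' : S'.PE, ∃ s : S.PE, ∀ i : I,
      ∑ i' : I', ((S'.prepEq s').1 i' - (S'.prepEq s').2 i') * T.qP i' i
        = (S.prepEq s).1 i - (S.prepEq s).2 i) ∧
  (∀ r' : S'.ME, ∃ r : S.ME, ∀ k : K, ∀ j : J,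
      ∑ kj' : K' × J', ((S'.measEq r').1 kj' - (S'.measEq r').2 kj') *
          (T.qO kj'.2 k kj'.1 * T.qM kj'.2 j)
        = (S.measEq r).1 (k, j) - (S.measEq r).2 (k, j))

/-- The contextual fraction. -/
noncomputable def ctxFraction {I J K : Type} [Fintype I] [Fintype J] [Fintype K]
    (S : Scenario I J K) (p : I → J → K → ℝ) : ℝ :=
  1 - sSup {l : ℝ | 0 ≤ l ∧ l ≤ 1 ∧ ∃ q q' : I → J → K → ℝ,
      Noncontextual S q ∧ IsBehavior q' ∧
      ∀ i j k, p i j k = l * q i j k + (1 - l) * q' i j k}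

/-- The robustness of contextuality. -/
noncomputable def robustness {I J K : Type} [Fintype I] [Fintype J] [Fintype K]
    (S : Scenario I J K) (p : I → J → K → ℝ) : ℝ :=
  sInf {l : ℝ | 0 ≤ l ∧ l ≤ 1 ∧ ∃ q : I → J → K → ℝ, Noncontextual S q ∧
      Noncontextual S (fun i j k => l * q i j k + (1 - l) * p i j k)}

/-- The robustness with respect to a fixed reference behavior. -/
noncomputable def refRobustness {I J K : Type} [Fintype I] [Fintype J] [Fintype K]
    (S : Scenario I J K) (pref p : I → J → K → ℝ) : ℝ :=
  sInf {l : ℝ | 0 ≤ l ∧ l ≤ 1 ∧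
      Noncontextual S (fun i j k => l * pref i j k + (1 - l) * p i j k)}

/-- One term of the Kullback-Leibler divergence, with the conventions
`0 log (0/q) = 0` and `p log (p/0) = ∞` for `p > 0`. -/
noncomputable def klTerm (p q : ℝ) : EReal :=
  if p = 0 then 0 else if q = 0 then ⊤ else ((p * Real.log (p / q) : ℝ) : EReal)

/-- KL divergence between behaviors: maximum over preparations and measurements. -/
noncomputable def DKL {I J K : Type} [Fintype I] [Fintype J] [Fintype K]
    (p q : I → J → K → ℝ) : EReal :=
  ⨆ i : I, ⨆ j : J, ∑ k : K, klTerm (p i j k) (q i j k)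

/-- The relative entropy of contextuality. -/
noncomputable def relEntCtx {I J K : Type} [Fintype I] [Fintype J] [Fintype K]
    (S : Scenario I J K) (p : I → J → K → ℝ) : EReal :=
  ⨅ q ∈ {q : I → J → K → ℝ | Noncontextual S q}, DKL p q

/-- ℓ1 distance between behaviors: maximum over preparations and measurements. -/
noncomputable def D1 {I J K : Type} [Fintype I] [Fintype J] [Fintype K]
    (p q : I → J → K → ℝ) : ℝ :=
  ⨆ ij : I × J, ∑ k : K, |p ij.1 ij.2 k - q ij.1 ij.2 k|

/-- The ℓ1-contextuality distance. -/
noncomputable def l1CtxDistance {I J K : Type} [Fintype I] [Fintype J] [Fintype K]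
    (S : Scenario I J K) (p : I → J → K → ℝ) : ℝ :=
  sInf {d : ℝ | ∃ q : I → J → K → ℝ, Noncontextual S q ∧ D1 p q = d}

/-- The uniform ℓ1-contextuality distance. -/
noncomputable def uniformL1CtxDistance {I J K : Type} [Fintype I] [Fintype J] [Fintype K]
    (S : Scenario I J K) (p : I → J → K → ℝ) : ℝ :=
  (1 / (2 * (Fintype.card I : ℝ) * (Fintype.card J : ℝ))) *
    sInf {d : ℝ | ∃ q : I → J → K → ℝ, Noncontextual S q ∧
      ∑ i, ∑ j, ∑ k, |p i j k - q i j k| = d}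

/-- The measurement-assignment polytope of a scenario. -/
def MAPolytope {I J K : Type} [Fintype I] [Fintype J] [Fintype K]
    (S : Scenario I J K) : Set (K × J → ℝ) :=
  {ξ | (∀ kj, 0 ≤ ξ kj) ∧ (∀ j, ∑ k, ξ (k, j) = 1) ∧
    ∀ r, ∑ kj : K × J, ((S.measEq r).1 kj - (S.measEq r).2 kj) * ξ kj = 0}

/-!
If `q₁` and `q₂` are noncontextual, so is `q₁ ⊗ q₂`: take the product ontic space with product
epistemic states and response functions; every operational equivalence of `S₁ ⊗ S₂` then
factorizes, and one of the two factors vanishes by noncontextuality of `q₁` or `q₂`.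
Writing `p₁p₂ - q₁q₂ = (p₁ - q₁)p₂ + q₁(p₂ - q₂)` and using the normalization of `p₂` and `q₁`,
the unnormalized ℓ1 distance of `p₁ ⊗ p₂` to `q₁ ⊗ q₂` is at most `|I₂||J₂|` times that of `p₁`
to `q₁` plus `|I₁||J₁|` times that of `p₂` to `q₂`. Normalizing and taking infima gives the claim.
-/

lemma sum_mul_sum_eq_sum_prod {A B : Type} [Fintype A] [Fintype B] (f : A → ℝ) (g : B → ℝ) :
    (∑ a, f a) * (∑ b, g b) = ∑ x : A × B, f x.1 * g x.2 := by
  rw [Fintype.sum_prod_type, Finset.sum_mul_sum]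

lemma sum_mul_sum_eq_sum_prodProdProdComm {K1 J1 K2 J2 : Type}
    [Fintype K1] [Fintype J1] [Fintype K2] [Fintype J2] (f : K1 × J1 → ℝ) (g : K2 × J2 → ℝ) :
    (∑ x, f x) * (∑ y, g y)
      = ∑ kj : (K1 × K2) × (J1 × J2), f (kj.1.1, kj.2.1) * g (kj.1.2, kj.2.2) := by
  rw [sum_mul_sum_eq_sum_prod]
  exact Fintype.sum_equiv (Equiv.prodProdProdComm K1 J1 K2 J2) _ _ (by rintro ⟨⟨a, b⟩, c, d⟩; rfl)

lemma sum_sum_sum_prod_mul {I1 J1 K1 I2 J2 K2 : Type}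
    [Fintype I1] [Fintype J1] [Fintype K1] [Fintype I2] [Fintype J2] [Fintype K2]
    (F : I1 → J1 → K1 → ℝ) (G : I2 → J2 → K2 → ℝ) :
    ∑ i : I1 × I2, ∑ j : J1 × J2, ∑ k : K1 × K2, F i.1 j.1 k.1 * G i.2 j.2 k.2
      = (∑ i1, ∑ j1, ∑ k1, F i1 j1 k1) * (∑ i2, ∑ j2, ∑ k2, G i2 j2 k2) := by
  simp only [Fintype.sum_prod_type, Finset.sum_mul_sum]

section Models

variable {I J K : Type} [Fintype I] [Fintype J] [Fintype K]

/-- `Noncontextual` asks for such a model over `Fin n`. -/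
structure IsNoncontextualModel {Λ : Type} [Fintype Λ] (S : Scenario I J K)
    (p : I → J → K → ℝ) (μ : I → Λ → ℝ) (ξ : Λ → J → K → ℝ) : Prop where
  isDist_state : ∀ i, IsDist (μ i)
  isDist_response : ∀ l j, IsDist (ξ l j)
  eq_sum : ∀ i j k, p i j k = ∑ l, ξ l j k * μ i l
  prep_noncontextual : ∀ s l, ∑ i, ((S.prepEq s).1 i - (S.prepEq s).2 i) * μ i l = 0
  meas_noncontextual :
    ∀ r l, ∑ kj : K × J, ((S.measEq r).1 kj - (S.measEq r).2 kj) * ξ l kj.2 kj.1 = 0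

lemma Noncontextual.exists_model {S : Scenario I J K} {p : I → J → K → ℝ}
    (h : Noncontextual S p) :
    ∃ (n : ℕ) (μ : I → Fin n → ℝ) (ξ : Fin n → J → K → ℝ), IsNoncontextualModel S p μ ξ := by
  obtain ⟨n, μ, ξ, hμ, hξ, hp, hprep, hmeas⟩ := h
  exact ⟨n, μ, ξ, hμ, hξ, hp, hprep, hmeas⟩

lemma IsNoncontextualModel.noncontextual {Λ : Type} [Fintype Λ] {S : Scenario I J K}
    {p : I → J → K → ℝ} {μ : I → Λ → ℝ} {ξ : Λ → J → K → ℝ}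
    (h : IsNoncontextualModel S p μ ξ) : Noncontextual S p := by
  let e := (Fintype.equivFin Λ).symm
  refine ⟨Fintype.card Λ, fun i l => μ i (e l), fun l => ξ (e l), fun i => ?_,
    fun l => h.isDist_response (e l), fun i j k => ?_, fun s l => h.prep_noncontextual s (e l),
    fun r l => h.meas_noncontextual r (e l)⟩
  · exact ⟨fun l => (h.isDist_state i).1 (e l), (e.sum_comp _).trans (h.isDist_state i).2⟩
  · exact (h.eq_sum i j k).trans (e.sum_comp (fun l => ξ l j k * μ i l)).symm

lemma IsNoncontextualModel.isBehavior {Λ : Type} [Fintype Λ] {S : Scenario I J K}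
    {p : I → J → K → ℝ} {μ : I → Λ → ℝ} {ξ : Λ → J → K → ℝ}
    (h : IsNoncontextualModel S p μ ξ) : IsBehavior p := by
  refine ⟨fun i j k => ?_, fun i j => ?_⟩
  · rw [h.eq_sum]
    exact Finset.sum_nonneg fun l _ =>
      mul_nonneg ((h.isDist_response l j).1 k) ((h.isDist_state i).1 l)
  · calc ∑ k, p i j k = ∑ l, (∑ k, ξ l j k) * μ i l := by
          simp only [h.eq_sum, Finset.sum_mul]
          exact Finset.sum_comm
      _ = 1 := by simp only [(h.isDist_response _ j).2, one_mul, (h.isDist_state i).2]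

lemma Noncontextual.isBehavior {S : Scenario I J K} {p : I → J → K → ℝ}
    (h : Noncontextual S p) : IsBehavior p := by
  obtain ⟨_, _, _, hmodel⟩ := h.exists_model
  exact hmodel.isBehavior

end Models

section Juxtaposition

variable {I1 J1 K1 I2 J2 K2 : Type}
  [Fintype I1] [Fintype J1] [Fintype K1] [Fintype I2] [Fintype J2] [Fintype K2]

lemma IsNoncontextualModel.prod {Λ1 Λ2 : Type} [Fintype Λ1] [Fintype Λ2]
    {S1 : Scenario I1 J1 K1} {S2 : Scenario I2 J2 K2}
    {q1 : I1 → J1 → K1 → ℝ} {q2 : I2 → J2 → K2 → ℝ}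
    {μ1 : I1 → Λ1 → ℝ} {ξ1 : Λ1 → J1 → K1 → ℝ} {μ2 : I2 → Λ2 → ℝ} {ξ2 : Λ2 → J2 → K2 → ℝ}
    (h1 : IsNoncontextualModel S1 q1 μ1 ξ1) (h2 : IsNoncontextualModel S2 q2 μ2 ξ2) :
    IsNoncontextualModel (S1.prod S2) (prodBehavior q1 q2)
      (fun (i : I1 × I2) (l : Λ1 × Λ2) => μ1 i.1 l.1 * μ2 i.2 l.2)
      (fun (l : Λ1 × Λ2) (j : J1 × J2) (k : K1 × K2) => ξ1 l.1 j.1 k.1 * ξ2 l.2 j.2 k.2) where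
  isDist_state i := isDist_prodFun (h1.isDist_state i.1) (h2.isDist_state i.2)
  isDist_response l j := isDist_prodFun (h1.isDist_response l.1 j.1) (h2.isDist_response l.2 j.2)
  eq_sum i j k := by
    rw [prodBehavior, h1.eq_sum, h2.eq_sum, sum_mul_sum_eq_sum_prod]
    exact Fintype.sum_congr _ _ fun l => by ring
  prep_noncontextual := by
    rintro (⟨s, γ⟩ | ⟨s, γ⟩) ⟨l1, l2⟩
    · rw [← zero_mul (∑ i2, γ.1 i2 * μ2 i2 l2), ← h1.prep_noncontextual s l1,
        sum_mul_sum_eq_sum_prod]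
      exact Fintype.sum_congr _ _ fun i => by simp only [Scenario.prod]; ring
    · rw [← mul_zero (∑ i1, γ.1 i1 * μ1 i1 l1), ← h2.prep_noncontextual s l2,
        sum_mul_sum_eq_sum_prod]
      exact Fintype.sum_congr _ _ fun i => by simp only [Scenario.prod]; ring
  meas_noncontextual := by
    rintro (⟨r, γ⟩ | ⟨r, γ⟩) ⟨l1, l2⟩
    · rw [← zero_mul (∑ kj2, γ.1 kj2 * ξ2 l2 kj2.2 kj2.1), ← h1.meas_noncontextual r l1,
        sum_mul_sum_eq_sum_prodProdProdComm]
      exact Fintype.sum_congr _ _ fun kj => by simp only [Scenario.prod]; ring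
    · rw [← mul_zero (∑ kj1, γ.1 kj1 * ξ1 l1 kj1.2 kj1.1), ← h2.meas_noncontextual r l2,
        sum_mul_sum_eq_sum_prodProdProdComm]
      exact Fintype.sum_congr _ _ fun kj => by simp only [Scenario.prod]; ring

lemma Noncontextual.prod {S1 : Scenario I1 J1 K1} {S2 : Scenario I2 J2 K2}
    {q1 : I1 → J1 → K1 → ℝ} {q2 : I2 → J2 → K2 → ℝ}
    (h1 : Noncontextual S1 q1) (h2 : Noncontextual S2 q2) :
    Noncontextual (S1.prod S2) (prodBehavior q1 q2) := by
  obtain ⟨_, _, _, hmodel1⟩ := h1.exists_model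
  obtain ⟨_, _, _, hmodel2⟩ := h2.exists_model
  exact (hmodel1.prod hmodel2).noncontextual

end Juxtaposition

lemma abs_mul_sub_mul_le {a b c d : ℝ} (hb : 0 ≤ b) (hc : 0 ≤ c) :
    |a * b - c * d| ≤ |a - c| * b + c * |b - d| := by
  calc |a * b - c * d| = |(a - c) * b + c * (b - d)| := by ring_nf
    _ ≤ |(a - c) * b| + |c * (b - d)| := abs_add_le _ _
    _ = |a - c| * b + c * |b - d| := by rw [abs_mul, abs_mul, abs_of_nonneg hb, abs_of_nonneg hc]

lemma IsBehavior.sum_sum_sum {I J K : Type} [Fintype I] [Fintype J] [Fintype K]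
    {p : I → J → K → ℝ} (hp : IsBehavior p) :
    ∑ i, ∑ j, ∑ k, p i j k = (Fintype.card I : ℝ) * Fintype.card J := by
  simp [hp.2]

lemma sum_abs_prodBehavior_sub_le {I1 J1 K1 I2 J2 K2 : Type}
    [Fintype I1] [Fintype J1] [Fintype K1] [Fintype I2] [Fintype J2] [Fintype K2]
    {p1 q1 : I1 → J1 → K1 → ℝ} {p2 q2 : I2 → J2 → K2 → ℝ}
    (hp2 : IsBehavior p2) (hq1 : IsBehavior q1) :
    ∑ i, ∑ j, ∑ k, |prodBehavior p1 p2 i j k - prodBehavior q1 q2 i j k|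
      ≤ (Fintype.card I2 : ℝ) * Fintype.card J2 * ∑ i, ∑ j, ∑ k, |p1 i j k - q1 i j k|
        + (Fintype.card I1 : ℝ) * Fintype.card J1 * ∑ i, ∑ j, ∑ k, |p2 i j k - q2 i j k| := by
  calc ∑ i, ∑ j, ∑ k, |prodBehavior p1 p2 i j k - prodBehavior q1 q2 i j k|
      ≤ ∑ i : I1 × I2, ∑ j : J1 × J2, ∑ k : K1 × K2,
          (|p1 i.1 j.1 k.1 - q1 i.1 j.1 k.1| * p2 i.2 j.2 k.2
            + q1 i.1 j.1 k.1 * |p2 i.2 j.2 k.2 - q2 i.2 j.2 k.2|) := by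
        gcongr with i _ j _ k _
        exact abs_mul_sub_mul_le (hp2.1 _ _ _) (hq1.1 _ _ _)
    _ = (∑ i, ∑ j, ∑ k, |p1 i j k - q1 i j k|) * ∑ i, ∑ j, ∑ k, p2 i j k
        + (∑ i, ∑ j, ∑ k, q1 i j k) * ∑ i, ∑ j, ∑ k, |p2 i j k - q2 i j k| := by
        simp only [Finset.sum_add_distrib]
        rw [sum_sum_sum_prod_mul (fun i j k => |p1 i j k - q1 i j k|) p2,
          sum_sum_sum_prod_mul q1 (fun i j k => |p2 i j k - q2 i j k|)]
    _ = _ := by rw [hp2.sum_sum_sum, hq1.sum_sum_sum]; ring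

lemma Real.sInf_le_sInf_add_sInf {S T U : Set ℝ} (hS : S.Nonempty) (hT : T.Nonempty)
    (hU : BddBelow U) (h : ∀ s ∈ S, ∀ t ∈ T, ∃ u ∈ U, u ≤ s + t) :
    sInf U ≤ sInf S + sInf T := by
  refine sub_le_iff_le_add'.mp (le_csInf hT fun t ht => sub_le_comm.mp (le_csInf hS fun s hs => ?_))
  obtain ⟨u, hu, hle⟩ := h s hs t ht
  linarith [csInf_le hU hu]

lemma Real.mul_sInf_le_mul_sInf_add_mul_sInf {S T U : Set ℝ} {a b c : ℝ}
    (ha : 0 ≤ a) (hb : 0 ≤ b) (hc : 0 ≤ c) (hS : S.Nonempty) (hT : T.Nonempty)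
    (hU : BddBelow U) (h : ∀ s ∈ S, ∀ t ∈ T, ∃ u ∈ U, c * u ≤ a * s + b * t) :
    c * sInf U ≤ a * sInf S + b * sInf T := by
  simp only [← smul_eq_mul, ← Real.sInf_smul_of_nonneg, ha, hb, hc]
  refine Real.sInf_le_sInf_add_sInf hS.smul_set hT.smul_set (hU.smul_of_nonneg hc) ?_
  rintro _ ⟨s, hs, rfl⟩ _ ⟨t, ht, rfl⟩
  obtain ⟨u, hu, hle⟩ := h s hs t ht
  exact ⟨c • u, Set.smul_mem_smul_set hu, hle⟩

theorem uniformL1CtxDistance_subadditive_general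
    {I1 J1 K1 I2 J2 K2 : Type}
    [Fintype I1] [Fintype J1] [Fintype K1] [Fintype I2] [Fintype J2] [Fintype K2]
    [Nonempty I1] [Nonempty J1] [Nonempty I2] [Nonempty J2]
    (S1 : Scenario I1 J1 K1) (S2 : Scenario I2 J2 K2)
    (p1 : I1 → J1 → K1 → ℝ) (p2 : I2 → J2 → K2 → ℝ)
    (hp2 : IsBehavior p2)
    (h1 : {q : I1 → J1 → K1 → ℝ | Noncontextual S1 q}.Nonempty)
    (h2 : {q : I2 → J2 → K2 → ℝ | Noncontextual S2 q}.Nonempty) :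
    uniformL1CtxDistance (S1.prod S2) (prodBehavior p1 p2)
      ≤ uniformL1CtxDistance S1 p1 + uniformL1CtxDistance S2 p2 := by
  obtain ⟨q1, hq1⟩ := h1
  obtain ⟨q2, hq2⟩ := h2
  refine Real.mul_sInf_le_mul_sInf_add_mul_sInf (by positivity) (by positivity) (by positivity)
    ⟨_, q1, hq1, rfl⟩ ⟨_, q2, hq2, rfl⟩ ⟨0, ?_⟩ ?_
  · rintro _ ⟨q, -, rfl⟩
    positivity
  rintro _ ⟨q1, hq1, rfl⟩ _ ⟨q2, hq2, rfl⟩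
  refine ⟨_, ⟨prodBehavior q1 q2, hq1.prod hq2, rfl⟩, ?_⟩
  calc _ ≤ 1 / (2 * (Fintype.card (I1 × I2) : ℝ) * Fintype.card (J1 × J2)) *
        ((Fintype.card I2 : ℝ) * Fintype.card J2 * ∑ i, ∑ j, ∑ k, |p1 i j k - q1 i j k|
          + (Fintype.card I1 : ℝ) * Fintype.card J1 * ∑ i, ∑ j, ∑ k, |p2 i j k - q2 i j k|) := by
        gcongr
        exact sum_abs_prodBehavior_sub_le hp2 hq1.isBehavior
    _ = _ := by
        simp only [Fintype.card_prod, Nat.cast_mul]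
        field_simp

/-- the uniform ℓ1-contextuality distance is subadditive under
independent juxtapositions. -/
theorem uniformL1CtxDistance_subadditive
    {I1 J1 K1 I2 J2 K2 : Type}
    [Fintype I1] [Fintype J1] [Fintype K1] [Fintype I2] [Fintype J2] [Fintype K2]
    [Nonempty I1] [Nonempty J1] [Nonempty K1] [Nonempty I2] [Nonempty J2] [Nonempty K2]
    (S1 : Scenario I1 J1 K1) (S2 : Scenario I2 J2 K2)
    (p1 : I1 → J1 → K1 → ℝ) (p2 : I2 → J2 → K2 → ℝ)
    (hp1 : IsBehavior p1) (hp2 : IsBehavior p2)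
    (h1 : {q : I1 → J1 → K1 → ℝ | Noncontextual S1 q}.Nonempty)
    (h2 : {q : I2 → J2 → K2 → ℝ | Noncontextual S2 q}.Nonempty)
    (h12 : {q : I1 × I2 → J1 × J2 → K1 × K2 → ℝ |
        Noncontextual (S1.prod S2) q}.Nonempty) :
    uniformL1CtxDistance (S1.prod S2) (prodBehavior p1 p2)
      ≤ uniformL1CtxDistance S1 p1 + uniformL1CtxDistance S2 p2 :=
  uniformL1CtxDistance_subadditive_general S1 S2 p1 p2 hp2 h1 h2
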